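/- arXiv:2110.01468 — 8 statements merged into one kernel-verified Lean document; each statement's English description precedes it below -/
import Mathlib

section
/- Let X be a nonempty Polish space and let (A_α)_{α<ω₁} be a family, indexed by the countable ordinals, of pairwise disjoint subsets of X each of which is non-meager in X. Then there exists α < ω₁ such that A_α does not have the property of Baire (i.e., A_α is not Baire measurable: there is no open set V such that the symmetric difference A_α △ V is meager). -/
/-!
If every `A_α` had the property of Baire, choose open `V_α` with `A_α ∆ V_α` meagre. Each `V_α` is
nonempty because `A_α` is not meagre, and for `α ≠ β` the open set `V_α ∩ V_β` is covered by
`A_α ∆ V_α ∪ A_β ∆ V_β` (as `A_α ∩ A_β = ∅`), hence meagre, hence empty by the Baire category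
theorem. A separable space admits only countably many pairwise disjoint nonempty open sets, but
there are uncountably many `α < ω₁`.
-/

open Cardinal TopologicalSpace

open scoped symmDiff

section Baire

variable {X : Type*} [TopologicalSpace X]

lemma Set.Nonempty.of_isMeagre_symmDiff {A V : Set X} (hA : ¬IsMeagre A)
    (hAV : IsMeagre (A ∆ V)) : V.Nonempty := by
  rw [Set.nonempty_iff_ne_empty]
  rintro rfl
  rw [← Set.bot_eq_empty, symmDiff_bot] at hAV
  exact hA hAV

lemma Disjoint.of_isMeagre_symmDiff [BaireSpace X] {A B U V : Set X} (hAB : Disjoint A B)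
    (hU : IsOpen U) (hV : IsOpen V) (hAU : IsMeagre (A ∆ U)) (hBV : IsMeagre (B ∆ V)) :
    Disjoint U V := by
  have hsub : U ∩ V ⊆ A ∆ U ∪ B ∆ V := by
    rintro x ⟨hxU, hxV⟩
    by_cases hxA : x ∈ A
    · exact Or.inr (Or.inr ⟨hxV, Set.disjoint_left.1 hAB hxA⟩)
    · exact Or.inl (Or.inr ⟨hxU, hxA⟩)
  rw [Set.disjoint_iff_inter_eq_empty, ← Set.not_nonempty_iff_eq_empty]
  exact fun hne ↦ not_isMeagre_of_isOpen (hU.inter hV) hne ((hAU.union hBV).mono hsub)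

theorem Set.PairwiseDisjoint.countable_of_not_isMeagre [BaireSpace X] [SeparableSpace X]
    {ι : Type*} {I : Set ι} {A : ι → Set X} (hd : I.PairwiseDisjoint A)
    (hA : ∀ i ∈ I, ¬IsMeagre (A i)) (hV : ∀ i ∈ I, ∃ V, IsOpen V ∧ IsMeagre (A i ∆ V)) :
    I.Countable := by
  choose! V hVopen hAV using hV
  refine Set.PairwiseDisjoint.countable_of_isOpen (s := V) ?_ hVopen
    fun i hi ↦ .of_isMeagre_symmDiff (hA i hi) (hAV i hi)
  intro i hi j hj hij
  exact (hd hi hj hij).of_isMeagre_symmDiff (hVopen i hi) (hVopen j hj) (hAV i hi) (hAV j hj)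

end Baire

lemma Ordinal.not_countable_Iio_ord_aleph_one :
    ¬(Set.Iio ((aleph 1).ord : Ordinal.{u})).Countable := by
  rw [← le_aleph0_iff_set_countable, Cardinal.mk_Iio_ordinal, card_ord, ← lift_aleph0.{u + 1, u},
    Cardinal.lift_le, not_le]
  exact aleph0_lt_aleph_one

theorem statement1_general (X : Type*) [TopologicalSpace X] [PolishSpace X]
    (A : Ordinal.{0} → Set X)
    (hdisj : ∀ α β, α < (Cardinal.aleph 1).ord → β < (Cardinal.aleph 1).ord → α ≠ β →
      Disjoint (A α) (A β))
    (hnonmeager : ∀ α, α < (Cardinal.aleph 1).ord → ¬ IsMeagre (A α)) :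
    ∃ α, α < (Cardinal.aleph 1).ord ∧
      ¬ ∃ V : Set X, IsOpen V ∧ IsMeagre (symmDiff (A α) V) := by
  by_contra! hBaire
  exact Ordinal.not_countable_Iio_ord_aleph_one <|
    Set.PairwiseDisjoint.countable_of_not_isMeagre (I := Set.Iio _) (A := A)
      (fun α hα β hβ ↦ hdisj α β hα hβ) hnonmeager hBaire

/-- Let `X` be a nonempty Polish space and let `⟨A_α : α < ω₁⟩` be a family of
pairwise disjoint subsets of `X`, each of which is non-meager in `X`. Then there exists
`α < ω₁` such that `A_α` does not have the property of Baire, i.e. there is no open set `V`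
with `A_α ∆ V` meager. -/
theorem statement1 (X : Type*) [TopologicalSpace X] [PolishSpace X] [Nonempty X]
    (A : Ordinal.{0} → Set X)
    (hdisj : ∀ α β, α < (Cardinal.aleph 1).ord → β < (Cardinal.aleph 1).ord → α ≠ β →
      Disjoint (A α) (A β))
    (hnonmeager : ∀ α, α < (Cardinal.aleph 1).ord → ¬ IsMeagre (A α)) :
    ∃ α, α < (Cardinal.aleph 1).ord ∧
      ¬ ∃ V : Set X, IsOpen V ∧ IsMeagre (symmDiff (A α) V) :=
  statement1_general X A hdisj hnonmeager
end

section
/- Let κ be a singular strong limit cardinal of countable cofinality. Then there exists a Σ¹₁-subset of ᵚκ that is not a Π¹₁-subset; that is, there exists a subtree U of ∏(^{<ω}κ)² such that for every subtree T of (^{<ω}κ)², the projection p[T] is not equal to the complement ᵚκ \ p[U]. -/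
/-!
Fix a cofinal sequence `fₙ` in `κ` and sort the nodes of `(^{<ω}κ)²` into countably many levels,
a node being of level `n` when its code (under a bijection with `κ`) lies below `fₙ`. Each level
has fewer than `κ` nodes, so, `κ` being a strong limit, every set of level-`n` nodes is coded by
some `a < κ`. The universal tree `U` admits a node of level `n` along a branch `x` iff the node
belongs to the set coded by `x n`. Given any tree `T`, let `x n` code the level-`n` part of `T`:
then `U` and `T` admit the same nodes along `x`, so `x ∈ p[U] ↔ x ∈ p[T]` and `p[T] ≠ ᵚκ \ p[U]`.
-/

universe u

open Cardinal

namespace Statement2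

variable {α : Type u}

/-- A subtree of `(^{<ω}κ)²`: a set of pairs of finite sequences in `κ` of equal length
that is closed under taking (pairs of) initial segments. -/
def IsSubtree (T : Set (List α × List α)) : Prop :=
  ∀ p ∈ T, p.1.length = p.2.length ∧ ∀ m : ℕ, (p.1.take m, p.2.take m) ∈ T

/-- The projection `p[T]` of a subtree `T` of `(^{<ω}κ)²`: the set of all `x ∈ ᵚκ` such that
for some `y ∈ ᵚκ`, all pairs of initial segments `⟨x↾m, y↾m⟩` lie in `T`. -/
def proj (T : Set (List α × List α)) : Set (ℕ → α) :=
  {x | ∃ y : ℕ → α, ∀ m : ℕ,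
    ((List.ofFn fun i : Fin m => x i), (List.ofFn fun i : Fin m => y i)) ∈ T}

open Set

section UniversalTree

def prefixPair (x y : ℕ → α) (m : ℕ) : List α × List α :=
  (List.ofFn fun i : Fin m => x i, List.ofFn fun i : Fin m => y i)

def truncate (j : ℕ) (p : List α × List α) : List α × List α :=
  (p.1.take j, p.2.take j)

theorem mem_proj_iff {T : Set (List α × List α)} {x : ℕ → α} :
    x ∈ proj T ↔ ∃ y, ∀ m, prefixPair x y m ∈ T :=
  Iff.rfl

theorem truncate_prefixPair (x y : ℕ → α) (j m : ℕ) :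
    truncate j (prefixPair x y m) = prefixPair x y (min j m) := by
  simp only [truncate, prefixPair, Prod.mk.injEq]
  constructor <;> exact List.ext_getElem (by simp) fun _ _ _ => by simp

theorem getElem?_prefixPair_fst (x y : ℕ → α) {n m : ℕ} :
    (prefixPair x y m).1[n]? = if n < m then some (x n) else none := by
  simp [prefixPair, List.getElem?_ofFn]

/-- A node `p` is admitted iff each of its truncations `q`, of level `n` say, lies in the set
coded by the `n`-th entry of `p.1` (when `p` is long enough to have one). -/
def universalTree (level : List α × List α → ℕ) (decode : ℕ → α → Set (List α × List α)) :
    Set (List α × List α) :=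
  {p | p.1.length = p.2.length ∧
    ∀ j, ∀ a ∈ p.1[level (truncate j p)]?, truncate j p ∈ decode (level (truncate j p)) a}

variable (level : List α × List α → ℕ) (decode : ℕ → α → Set (List α × List α))

theorem isSubtree_universalTree : IsSubtree (universalTree level decode) := by
  rintro p ⟨hlen, hp⟩
  refine ⟨hlen, fun m => ⟨by simp [hlen], fun j a ha => ?_⟩⟩
  have htrunc : truncate j (truncate m p) = truncate (min j m) p := by
    simp [truncate, List.take_take]
  change a ∈ (p.1.take m)[level (truncate j (truncate m p))]? at ha
  change truncate j (truncate m p) ∈ decode (level (truncate j (truncate m p))) a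
  rw [htrunc, List.getElem?_take] at ha
  rw [htrunc]
  split_ifs at ha
  · exact hp _ a ha
  · simp at ha

theorem mem_proj_universalTree_iff {x : ℕ → α} :
    x ∈ proj (universalTree level decode) ↔
      ∃ y, ∀ m, prefixPair x y m ∈
        decode (level (prefixPair x y m)) (x (level (prefixPair x y m))) := by
  simp only [mem_proj_iff]
  refine exists_congr fun y =>
    ⟨fun hy m => ?_, fun hy m => ⟨by simp [prefixPair], fun j a ha => ?_⟩⟩
  · set n := level (prefixPair x y m)
    have hM := (hy (max m (n + 1))).2 m (x n)
    rw [truncate_prefixPair, min_eq_left (le_max_left _ _), getElem?_prefixPair_fst,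
      if_pos (by omega)] at hM
    exact hM rfl
  · rw [truncate_prefixPair] at ha ⊢
    rw [getElem?_prefixPair_fst] at ha
    split_ifs at ha
    · cases ha
      exact hy _
    · simp at ha

theorem proj_ne_compl_proj_universalTree
    (hdecode : ∀ n (X : Set (List α × List α)), ∃ a,
      ∀ p, level p = n → (p ∈ decode n a ↔ p ∈ X))
    (T : Set (List α × List α)) :
    proj T ≠ (proj (universalTree level decode))ᶜ := by
  choose code hcode using hdecode
  have hdiag : (code · T) ∈ proj (universalTree level decode) ↔ (code · T) ∈ proj T := by
    rw [mem_proj_universalTree_iff, mem_proj_iff]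
    exact exists_congr fun y => forall_congr' fun m => hcode _ T _ rfl
  intro hT
  rw [hT] at hdiag
  exact iff_not_self hdiag

end UniversalTree

theorem exists_decode_of_mk_set_le {α β : Type u} (level : β → ℕ)
    (hlevel : ∀ n, #(Set (level ⁻¹' {n})) ≤ #α) :
    ∃ decode : ℕ → α → Set β,
      ∀ n (X : Set β), ∃ a, ∀ p, level p = n → (p ∈ decode n a ↔ p ∈ X) := by
  have hsurj : ∀ n, ∃ g : α → Set (level ⁻¹' {n}), Function.Surjective g := fun n =>
    let ⟨emb⟩ := (Cardinal.le_def _ _).mp (hlevel n)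
    ⟨Function.invFun emb, Function.invFun_surjective emb.injective⟩
  choose g hg using hsurj
  refine ⟨fun n a => Subtype.val '' g n a, fun n X => ?_⟩
  obtain ⟨a, ha⟩ := hg n (Subtype.val ⁻¹' X)
  refine ⟨a, fun p hp => ?_⟩
  show p ∈ Subtype.val '' g n a ↔ p ∈ X
  rw [ha, Subtype.image_preimage_coe]
  exact and_iff_right hp

theorem exists_cofinal_seq_of_cof_eq_aleph0 {o : Ordinal.{u}} (hcof : o.cof = ℵ₀) :
    ∃ f : ℕ → o.ToType, ∀ a, ∃ n, a ≤ f n := by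
  obtain ⟨S, hS, hScard⟩ := Order.exists_cof_eq o.ToType
  rw [Ordinal.cof_toType, hcof] at hScard
  have hne : S.Nonempty := nonempty_coe_sort.mp (mk_ne_zero_iff.mp (hScard ▸ aleph0_ne_zero))
  obtain ⟨f, rfl⟩ := (countable_coe_iff.mp (mk_le_aleph0_iff.mp hScard.le)).exists_eq_range hne
  refine ⟨f, fun a => ?_⟩
  obtain ⟨_, ⟨n, rfl⟩, hn⟩ := hS a
  exact ⟨n, hn⟩

theorem mk_Iic_lt {κ : Cardinal.{u}} (hκ : ℵ₀ ≤ κ) (a : κ.ord.ToType) : #(Iic a) < κ := by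
  have hIio : #(Iio a) < κ := by simpa using mk_Iio_lt a
  calc #(Iic a) = #(insert a (Iio a) : Set _) := by rw [Iio_insert]
    _ ≤ #(Iio a) + 1 := mk_insert_le
    _ < κ := add_lt_of_lt hκ hIio (one_lt_aleph0.trans_le hκ)

theorem exists_level_mk_preimage_lt {β : Type u} {κ : Cardinal.{u}} (hβ : #β = κ)
    (hκ : ℵ₀ ≤ κ) (hcof : κ.ord.cof = ℵ₀) :
    ∃ level : β → ℕ, ∀ n, #(level ⁻¹' {n}) < κ := by
  obtain ⟨e⟩ : Nonempty (β ≃ κ.ord.ToType) := Cardinal.eq.mp (by rw [hβ, mk_ord_toType])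
  obtain ⟨f, hf⟩ := exists_cofinal_seq_of_cof_eq_aleph0 hcof
  choose level hlevel using fun b => hf (e b)
  refine ⟨level, fun n => ?_⟩
  have hsub : level ⁻¹' {n} ⊆ e ⁻¹' Iic (f n) := by
    rintro b rfl
    exact hlevel b
  calc #(level ⁻¹' {n}) ≤ #(e ⁻¹' Iic (f n)) := mk_le_mk_of_subset hsub
    _ = #(Iic (f n)) := mk_preimage_equiv e _
    _ < κ := mk_Iic_lt hκ (f n)

end Statement2

open Statement2

/-- Let `κ` be a singular strong limit cardinal of countable cofinality
(`κ` uncountable, `cof κ = ω`, and `2^μ < κ` for all `μ < κ`). Then there exists a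
`Σ¹₁`-subset of `ᵚκ` that is not a `Π¹₁`-subset: there is a subtree `U` of `(^{<ω}κ)²` such
that for every subtree `T` of `(^{<ω}κ)²`, the projection `p[T]` is not equal to the
complement of `p[U]`. Here the set `κ` is represented by the canonical type `κ.ord.toType`
of order type `κ`. -/
theorem statement2 (κ : Cardinal.{u}) (huncount : ℵ₀ < κ)
    (hstronglimit : ∀ μ < κ, (2 : Cardinal.{u}) ^ μ < κ)
    (hcof : κ.ord.cof = ℵ₀) :
    ∃ U : Set (List κ.ord.ToType × List κ.ord.ToType), IsSubtree U ∧
      ∀ T : Set (List κ.ord.ToType × List κ.ord.ToType), IsSubtree T →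
        proj T ≠ (proj U)ᶜ := by
  have hκ : ℵ₀ ≤ κ := huncount.le
  have : Infinite κ.ord.ToType := infinite_iff.mpr (by rwa [mk_ord_toType])
  have hnodes : #(List κ.ord.ToType × List κ.ord.ToType) = κ := by
    simpa [mk_ord_toType] using mul_eq_self hκ
  obtain ⟨level, hlevel⟩ := exists_level_mk_preimage_lt hnodes hκ hcof
  obtain ⟨decode, hdecode⟩ := exists_decode_of_mk_set_le (α := κ.ord.ToType) level fun n => by
    rw [mk_set, mk_ord_toType]
    exact (hstronglimit _ (hlevel n)).le
  exact ⟨universalTree level decode, isSubtree_universalTree level decode,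
    fun T _ => proj_ne_compl_proj_universalTree level decode hdecode T⟩
end

section
/- Let κ be a singular strong limit cardinal of countable cofinality, fix a bijection g : κ × κ → κ, let κ⃗ = ⟨κ_m : m < ω⟩ be a strictly increasing sequence of cardinals cofinal in κ, and let a⃗ = ⟨a_α : α < κ⟩ be a sequence of subsets of κ. If B is a Σ¹₁-subset of ᵚκ with B ⊆ WO(κ⃗, a⃗), then there exists an ordinal γ < κ⁺ such that ‖x‖ < γ for all x ∈ B. -/
/-!
Kunen–Martin. For `x : ℕ → κ` let `b ≺ₓ c` hold iff, for every `m`, `g(b, c) ∈ a_{x(m)}`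
whenever `g(b, c)` lies below `κ_m`; if `y` witnesses `x ∈ WO(κ⃗, a⃗)`, then `≺ₓ` is `⊲_y`.
The tree of finite sequences `(s, t, u)` with `(s, t) ∈ T` and `u` descending for the part of
`≺ₛ` already decided by `s` is well-founded, since an infinite branch would give `x ∈ p[T]`
together with an infinite `≺ₓ`-descending sequence. Every finite `⊲_y`-descending sequence
lifts to a node, so `otp(y)` is at most the rank of the root, which is below `κ⁺` because the
tree has only `κ` nodes.
-/

universe u

open Cardinal

namespace Statement3

variable {α : Type u}

/-- A subtree of `(^{<ω}κ)²`: a set of pairs of finite sequences in `κ` of equal length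
that is closed under taking (pairs of) initial segments. -/
def IsSubtree (T : Set (List α × List α)) : Prop :=
  ∀ p ∈ T, p.1.length = p.2.length ∧ ∀ m : ℕ, (p.1.take m, p.2.take m) ∈ T

/-- The projection `p[T]` of a subtree `T` of `(^{<ω}κ)²`. -/
def proj (T : Set (List α × List α)) : Set (ℕ → α) :=
  {x | ∃ y : ℕ → α, ∀ m : ℕ,
    ((List.ofFn fun i : Fin m => x i), (List.ofFn fun i : Fin m => y i)) ∈ T}

/-- Given a bijection `g : κ × κ ≃ κ` and a subset `z ⊆ κ`, the binary relation `⊲_z` on `κ`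
given by `a ⊲_z b ↔ g(a, b) ∈ z`. -/
def relOf (g : α × α ≃ α) (z : Set α) : α → α → Prop :=
  fun a b => g (a, b) ∈ z

/-- The canonical ordinal index (below `κ.ord`) of an element of `κ.ord.ToType`. -/
noncomputable def idx (κ : Cardinal.{u}) (b : κ.ord.ToType) : Ordinal.{u} :=
  ((Ordinal.ToType.mk (o := κ.ord)).symm b : Set.Iio κ.ord)

end Statement3

open Statement3

theorem IsWellFounded.card_rank_le {α : Type u} (r : α → α → Prop) [IsWellFounded α r]
    (a : α) : (rank r a).card ≤ #α := by
  have hsub : Set.Iio (rank r a) ⊆ Set.range (rank r) := fun o ho =>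
    IsWellFounded.mem_range_rank_of_le (le_of_lt ho)
  have h := (lift_le.{u}.2 (mk_le_mk_of_subset hsub)).trans mk_range_le_lift
  rwa [Cardinal.mk_Iio_ordinal, lift_lift, lift_le] at h

section AppendSingleton

variable {γ : Type*} (f : ℕ → List γ)

theorem List.length_eq_of_append_singleton (hf : ∀ n, ∃ e, f (n + 1) = f n ++ [e]) (n : ℕ) :
    (f n).length = (f 0).length + n := by
  induction n with
  | zero => rfl
  | succ n ih => obtain ⟨e, he⟩ := hf n; simp [he, ih, Nat.add_assoc]

theorem List.exists_seq_getElem_eq_of_append_singleton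
    (hf : ∀ n, ∃ e, f (n + 1) = f n ++ [e]) :
    ∃ z : ℕ → γ, ∀ n k (hk : k < (f n).length), (f n)[k] = z k := by
  have hlen : ∀ n, n < (f (n + 1)).length := fun n => by
    rw [List.length_eq_of_append_singleton f hf]; omega
  have hpre : ∀ {m n}, m ≤ n → f m <+: f n := by
    intro m n hmn
    induction n, hmn using Nat.le_induction with
    | base => exact List.prefix_refl _
    | succ n _ ih => obtain ⟨e, he⟩ := hf n; exact ih.trans (he ▸ List.prefix_append _ _)
  refine ⟨fun k => (f (k + 1))[k]'(hlen k), fun n k hk => ?_⟩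
  rcases le_total n (k + 1) with h | h
  · exact (hpre h).getElem hk
  · exact ((hpre h).getElem (hlen k)).symm

end AppendSingleton

namespace KunenMartin

variable {α δ : Type u} (T : Set (List α × List α)) (C : ℕ → α → δ → δ → Prop)

def codedRel (x : ℕ → α) (b c : δ) : Prop :=
  ∀ m, C m (x m) b c

/-- A node `[(s 0, t 0, u 0), …, (s (n-1), t (n-1), u (n-1))]` encodes the triple `(s, t, u)`. -/
def tree : Set (List (α × α × δ)) :=
  {p | (p.map (·.1), p.map (·.2.1)) ∈ T ∧
    ∀ m (hm : m < p.length), (p.map (·.2.2)).Pairwise fun b c => C m p[m].1 c b}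

def child (p q : List (α × α × δ)) : Prop :=
  p ∈ tree T C ∧ ∃ e, p = q ++ [e]

theorem wellFounded_child (hT : IsSubtree T)
    (hC : ∀ x ∈ proj T, WellFounded (codedRel C x)) : WellFounded (child T C) := by
  refine wellFounded_iff_isEmpty_descending_chain.2 ⟨fun ⟨f, hf⟩ => ?_⟩
  obtain ⟨z, hz⟩ := List.exists_seq_getElem_eq_of_append_singleton f fun n => (hf n).2
  have hlen : ∀ n k, k < n + 1 → k < (f (n + 1)).length := fun n k hk => by
    rw [List.length_eq_of_append_singleton f fun n => (hf n).2]; omega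
  set x : ℕ → α := fun k => (z k).1
  set u : ℕ → δ := fun k => (z k).2.2
  have hx : x ∈ proj T := by
    refine ⟨fun k => (z k).2.1, fun n => ?_⟩
    have htake : (f (n + 1)).take n = List.ofFn fun i : Fin n => z i :=
      List.ext_getElem (by simpa using (hlen n n n.lt_succ_self).le) fun i hi _ => by
        simp [hz (n + 1) i (hlen n i (by simp at hi; omega))]
    have hT' := (hT _ (hf n).1.1).2 n
    rwa [← List.map_take, ← List.map_take, htake, List.map_ofFn, List.map_ofFn] at hT'
  have hdesc : ∀ n, codedRel C x (u (n + 1)) (u n) := by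
    intro n m
    have hN := (hf (n + m + 1)).1.2 m (hlen _ _ (by omega))
    rw [List.pairwise_iff_getElem] at hN
    have hnm := hN n (n + 1) (by simp; exact hlen _ _ (by omega))
      (by simp; exact hlen _ _ (by omega)) n.lt_succ_self
    simpa [hz, u, x] using hnm
  exact (wellFounded_iff_isEmpty_descending_chain.1 (hC x hx)).false ⟨u, hdesc⟩

def branchNode (x w : ℕ → α) (l : List δ) : List (α × α × δ) :=
  l.mapIdx fun i d => (x i, w i, d)

section Rank

variable {T C} {x w : ℕ → α} {r : δ → δ → Prop}

theorem branchNode_mem_tree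
    (hw : ∀ n, ((List.ofFn fun i : Fin n => x i), (List.ofFn fun i : Fin n => w i)) ∈ T)
    (hr : r ≤ codedRel C x) {l : List δ} (hl : l.Pairwise fun b c => r c b) :
    branchNode x w l ∈ tree T C := by
  refine ⟨?_, fun m hm => ?_⟩
  · convert hw l.length using 2 <;>
      exact List.ext_getElem (by simp [branchNode]) fun i _ _ => by simp [branchNode]
  · have hmap : (branchNode x w l).map (·.2.2) = l :=
      List.ext_getElem (by simp [branchNode]) fun i _ _ => by simp [branchNode]
    rw [hmap]
    simpa [branchNode] using hl.imp fun h => hr _ _ h m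

theorem rank_lt_rank_branchNode [IsWellFounded _ (child T C)] [IsTrans δ r]
    [IsWellFounded δ r]
    (hw : ∀ n, ((List.ofFn fun i : Fin n => x i), (List.ofFn fun i : Fin n => w i)) ∈ T)
    (hr : r ≤ codedRel C x) (b : δ) :
    ∀ l : List δ, (l ++ [b]).Pairwise (fun b c => r c b) →
      IsWellFounded.rank r b < IsWellFounded.rank (child T C) (branchNode x w l) := by
  induction b using IsWellFounded.induction r with
  | _ b ih =>
  intro l hl
  have hchild : child T C (branchNode x w (l ++ [b])) (branchNode x w l) :=
    ⟨branchNode_mem_tree hw hr hl, _, List.mapIdx_append_one⟩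
  refine lt_of_le_of_lt ?_ (IsWellFounded.rank_lt_of_rel hchild)
  rw [IsWellFounded.rank_eq]
  refine Ordinal.iSup_le fun ⟨c, hcb⟩ => Order.succ_le_of_lt (ih c hcb (l ++ [b]) ?_)
  have hbl : ∀ a ∈ l, r b a := fun a ha => List.pairwise_append.1 hl |>.2.2 a ha b (by simp)
  refine List.pairwise_append.2 ⟨hl, List.pairwise_singleton _ _, fun a ha c' hc' => ?_⟩
  obtain rfl := List.mem_singleton.1 hc'
  rcases List.mem_append.1 ha with ha | ha
  · exact _root_.trans hcb (hbl a ha)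
  · exact List.mem_singleton.1 ha ▸ hcb

theorem type_le_rank_nil [IsWellFounded _ (child T C)] [IsWellOrder δ r] (hx : x ∈ proj T)
    (hr : r ≤ codedRel C x) : Ordinal.type r ≤ IsWellFounded.rank (child T C) [] := by
  obtain ⟨w, hw⟩ := hx
  refine le_of_forall_lt fun o ho => ?_
  obtain ⟨b, rfl⟩ := Ordinal.typein_surj r ho
  rw [← IsWellFounded.rank_eq_typein]
  simpa [branchNode] using rank_lt_rank_branchNode hw hr b [] (by simp)

end Rank

end KunenMartin

theorem Cardinal.mk_list_prod_prod (X : Type u) [Infinite X] : #(List (X × X × X)) = #X := by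
  rw [mk_list_eq_mk, mk_prod, mk_prod, lift_id, lift_id, mul_eq_self (aleph0_le_mk X),
    mul_eq_self (aleph0_le_mk X)]

open KunenMartin

section Levels

variable {κ : Cardinal.{u}} (g : κ.ord.ToType × κ.ord.ToType ≃ κ.ord.ToType)
  (κseq : ℕ → Cardinal.{u}) (a : κ.ord.ToType → Set κ.ord.ToType)

def levelCode (m : ℕ) (v b c : κ.ord.ToType) : Prop :=
  idx κ (g (b, c)) < (κseq m).ord → g (b, c) ∈ a v

variable {κseq}

theorem exists_idx_lt_ord (hκseqcof : ∀ c < κ, ∃ m, c < κseq m) (b : κ.ord.ToType) :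
    ∃ m, idx κ b < (κseq m).ord := by
  have hb : idx κ b < κ.ord := ((Ordinal.ToType.mk (o := κ.ord)).symm b).2
  obtain ⟨m, hm⟩ := hκseqcof _ (lt_ord.1 hb)
  exact ⟨m, lt_ord.2 hm⟩

theorem relOf_eq_codedRel_levelCode (hκseqcof : ∀ c < κ, ∃ m, c < κseq m)
    {x : ℕ → κ.ord.ToType} {y : Set κ.ord.ToType}
    (hlev : ∀ m, {b | b ∈ y ∧ idx κ b < (κseq m).ord} = a (x m)) :
    relOf g y = codedRel (levelCode g κseq a) x := by
  ext b c
  constructor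
  · intro hbc m hm
    exact hlev m ▸ ⟨hbc, hm⟩
  · intro hbc
    obtain ⟨m, hm⟩ := exists_idx_lt_ord hκseqcof (g (b, c))
    exact (hlev m ▸ hbc m hm : g (b, c) ∈ {b | b ∈ y ∧ _}).1

end Levels

theorem statement3_general (κ : Cardinal.{u}) (huncount : ℵ₀ < κ)
    (g : κ.ord.ToType × κ.ord.ToType ≃ κ.ord.ToType)
    (κseq : ℕ → Cardinal.{u})
    (hκseqcof : ∀ c < κ, ∃ m, c < κseq m)
    (a : κ.ord.ToType → Set κ.ord.ToType)
    (B : Set (ℕ → κ.ord.ToType))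
    (hB : ∃ T : Set (List κ.ord.ToType × List κ.ord.ToType), IsSubtree T ∧ B = proj T)
    (hBsub : ∀ x ∈ B, ∃ y : Set κ.ord.ToType, IsWellOrder κ.ord.ToType (relOf g y) ∧
      ∀ m : ℕ, {b | b ∈ y ∧ idx κ b < (κseq m).ord} = a (x m)) :
    ∃ γ : Ordinal.{u}, γ < (Order.succ κ).ord ∧
      ∀ x ∈ B, ∀ y : Set κ.ord.ToType,
        ∀ hwo : IsWellOrder κ.ord.ToType (relOf g y),
          (∀ m : ℕ, {b | b ∈ y ∧ idx κ b < (κseq m).ord} = a (x m)) →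
          @Ordinal.type κ.ord.ToType (relOf g y) hwo < γ := by
  obtain ⟨T, hT, rfl⟩ := hB
  set C := levelCode g κseq a
  have : IsWellFounded _ (child T C) := ⟨wellFounded_child T C hT fun x hx => by
    obtain ⟨y, hwo, hlev⟩ := hBsub x hx
    exact relOf_eq_codedRel_levelCode g a hκseqcof hlev ▸ hwo.wf⟩
  refine ⟨Order.succ (IsWellFounded.rank (child T C) []), ?_, fun x hx y hwo hlev => ?_⟩
  · have : Infinite κ.ord.ToType := infinite_iff.2 (by simpa using huncount.le)
    have hcard := (IsWellFounded.card_rank_le (child T C) []).trans_eq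
      (mk_list_prod_prod κ.ord.ToType)
    rw [mk_toType, card_ord] at hcard
    exact (isSuccLimit_ord (huncount.le.trans (Order.le_succ κ))).succ_lt
      (lt_ord.2 (hcard.trans_lt (Order.lt_succ κ)))
  · have hr := (relOf_eq_codedRel_levelCode g a hκseqcof hlev).le
    exact (type_le_rank_nil hx hr).trans_lt (Order.lt_succ _)

/-- Boundedness lemma. Let `κ` be a singular strong limit cardinal of
countable cofinality, represented by the type `κ.ord.ToType`, let `g : κ × κ ≃ κ` be a
bijection, let `⟨κ_m : m < ω⟩` be a strictly increasing sequence of cardinals cofinal in `κ`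
and let `⟨a_β : β < κ⟩` be a sequence of subsets of `κ`. If `B` is a `Σ¹₁`-subset of `ᵚκ`
with `B ⊆ WO(κ⃗, a⃗)`, then there is an ordinal `γ < κ⁺` such that `‖x‖ < γ` for all `x ∈ B`,
i.e. every `y ∈ WO_κ` witnessing `x ∈ WO(κ⃗, a⃗)` codes a well-ordering of `κ` of order type
less than `γ`. -/
theorem statement3 (κ : Cardinal.{u}) (huncount : ℵ₀ < κ)
    (hstronglimit : ∀ μ < κ, (2 : Cardinal.{u}) ^ μ < κ)
    (hcof : κ.ord.cof = ℵ₀)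
    (g : κ.ord.ToType × κ.ord.ToType ≃ κ.ord.ToType)
    (κseq : ℕ → Cardinal.{u}) (hκseqlt : ∀ m, κseq m < κ) (hκseqmono : StrictMono κseq)
    (hκseqcof : ∀ c < κ, ∃ m, c < κseq m)
    (a : κ.ord.ToType → Set κ.ord.ToType)
    (B : Set (ℕ → κ.ord.ToType))
    (hB : ∃ T : Set (List κ.ord.ToType × List κ.ord.ToType), IsSubtree T ∧ B = proj T)
    (hBsub : ∀ x ∈ B, ∃ y : Set κ.ord.ToType, IsWellOrder κ.ord.ToType (relOf g y) ∧
      ∀ m : ℕ, {b | b ∈ y ∧ idx κ b < (κseq m).ord} = a (x m)) :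
    ∃ γ : Ordinal.{u}, γ < (Order.succ κ).ord ∧
      ∀ x ∈ B, ∀ y : Set κ.ord.ToType,
        ∀ hwo : IsWellOrder κ.ord.ToType (relOf g y),
          (∀ m : ℕ, {b | b ∈ y ∧ idx κ b < (κseq m).ord} = a (x m)) →
          @Ordinal.type κ.ord.ToType (relOf g y) hwo < γ :=
  statement3_general κ huncount g κseq hκseqcof a B hB hBsub
end

section
/- Let κ be a singular strong limit cardinal of countable cofinality and fix a bijection g : κ × κ → κ. For every continuous function ι : ᵚκ → 𝒫(κ) with ι(u) ∈ WO_κ for all u ∈ ᵚκ, there exists an ordinal γ < κ⁺ such that otp(ι(u)) < γ for all u ∈ ᵚκ. -/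
universe u

open Cardinal

namespace Statement4

variable {α : Type u}

/-- Given a bijection `g : κ × κ ≃ κ` and a subset `z ⊆ κ`, the binary relation `⊲_z` on `κ`
given by `a ⊲_z b ↔ g(a, b) ∈ z`. -/
def relOf (g : α × α ≃ α) (z : Set α) : α → α → Prop :=
  fun a b => g (a, b) ∈ z

/-- The canonical ordinal index (below `κ.ord`) of an element of `κ.ord.ToType`. -/
noncomputable def idx (κ : Cardinal.{u}) (b : κ.ord.ToType) : Ordinal.{u} :=
  ((Ordinal.ToType.mk (o := κ.ord)).symm b : Set.Iio κ.ord)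

/-- The topology on `ᵚκ` whose basic open sets consist of all functions extending a given
finite sequence. -/
def seqTop (α : Type u) : TopologicalSpace (ℕ → α) :=
  TopologicalSpace.generateFrom
    {S | ∃ (n : ℕ) (s : ℕ → α), S = {f | ∀ i < n, f i = s i}}

/-- The topology on `𝒫(κ)` whose basic open sets consist of all subsets of `κ` whose
intersection with a given ordinal `η < κ` equals a fixed subset of `η`. -/
noncomputable def powTop (κ : Cardinal.{u}) : TopologicalSpace (Set κ.ord.ToType) :=
  TopologicalSpace.generateFrom
    {S | ∃ (η : Ordinal.{u}) (a : Set κ.ord.ToType), η < κ.ord ∧ (∀ b ∈ a, idx κ b < η) ∧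
      S = {y | {b | b ∈ y ∧ idx κ b < η} = a}}

end Statement4

open Statement4

/-!
A Kunen–Martin argument. Order pairs `(s, a)` of a finite sequence `s` in `κ` and a point
`a ∈ κ` by letting `(t, a)` lie below `(s, b)` when `t` extends `s` and `a ⊲_{ι(u)} b` for every
`u` extending `t`. An infinite descending chain of such pairs converges to some `u ∈ ᵚκ` and
projects to an infinite descending chain of `⊲_{ι(u)}`, so this relation is well-founded; as it
lives on a set of size `κ`, all its ranks lie below `κ⁺`. By continuity of `ι`, each instance
`a ⊲_{ι(u)} b` is forced by a finite initial segment of `u`, so the rank of `a` in `⊲_{ι(u)}` is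
at most the rank of the pair `([], a)`.
-/

open Cardinal PiNat Topology Ordinal

theorem exists_cylinder_subset_of_isOpen_seqTop {α : Type u} {U : Set (ℕ → α)} (hU : IsOpen[seqTop α] U)
    {u : ℕ → α} (hu : u ∈ U) : ∃ n, cylinder u n ⊆ U := by
  induction hU generalizing u with
  | basic S hS =>
    obtain ⟨n, s, rfl⟩ := hS
    exact ⟨n, fun v hv i hi => (hv i hi).trans (hu i hi)⟩
  | univ => exact ⟨0, Set.subset_univ _⟩
  | inter S T _ _ ihS ihT =>
    obtain ⟨n, hn⟩ := ihS hu.1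
    obtain ⟨m, hm⟩ := ihT hu.2
    exact ⟨max n m, Set.subset_inter ((cylinder_anti u (le_max_left n m)).trans hn)
      ((cylinder_anti u (le_max_right n m)).trans hm)⟩
  | sUnion S _ ih =>
    obtain ⟨T, hT, huT⟩ := hu
    obtain ⟨n, hn⟩ := ih T hT huT
    exact ⟨n, hn.trans (Set.subset_sUnion_of_mem hT)⟩

theorem isOpen_setOf_mem_powTop {κ : Cardinal.{u}} (hκ : ℵ₀ ≤ κ) (c : κ.ord.ToType) :
    IsOpen[powTop κ] {y | c ∈ y} := by
  have hη : idx κ c + 1 < κ.ord :=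
    (isSuccLimit_ord hκ).add_one_lt ((Ordinal.ToType.mk (o := κ.ord)).symm c).2
  rw [@isOpen_iff_forall_mem_open]
  intro y hy
  -- the basic neighbourhood of `y` fixing `y ∩ (idx c + 1)` decides membership of `c`
  refine ⟨{y' | {b | b ∈ y' ∧ idx κ b < idx κ c + 1} = {b | b ∈ y ∧ idx κ b < idx κ c + 1}},
    fun y' hy' => ?_, TopologicalSpace.GenerateOpen.basic _ ⟨_, _, hη, fun b hb => hb.2, rfl⟩,
    rfl⟩
  have hc : c ∈ {b | b ∈ y ∧ idx κ b < idx κ c + 1} := ⟨hy, lt_add_one _⟩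
  rw [← (hy' : _ = _)] at hc
  exact hc.1

section BoundednessOfOpenWellOrders

variable {X : Type u}

def ExtendsList (u : ℕ → X) (s : List X) : Prop :=
  ∀ i (h : i < s.length), u i = s[i]

theorem extendsList_nil (u : ℕ → X) : ExtendsList u [] :=
  fun _ h => absurd h (Nat.not_lt_zero _)

theorem extendsList_ofFn_iff {u v : ℕ → X} {n : ℕ} :
    ExtendsList v (List.ofFn fun i : Fin n => u i) ↔ v ∈ cylinder u n := by
  simp [ExtendsList, mem_cylinder_iff]

theorem ExtendsList.prefix_ofFn {u : ℕ → X} {s : List X} (hs : ExtendsList u s) {m : ℕ}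
    (hm : s.length ≤ m) : s <+: List.ofFn fun i : Fin m => u i := by
  rw [List.prefix_iff_eq_take]
  refine List.ext_getElem (by simp [hm]) fun i h _ => ?_
  simp [hs i h]

theorem exists_extendsList_of_prefix_succ [Nonempty X] {s : ℕ → List X}
    (hs : ∀ n, s n <+: s (n + 1)) : ∃ u : ℕ → X, ∀ n, ExtendsList u (s n) := by
  classical
  have hmono : ∀ {m n}, m ≤ n → s m <+: s n := fun h => by
    induction h with
    | refl => exact List.prefix_refl _
    | step _ ih => exact ih.trans (hs _)
  refine ⟨fun i => if h : ∃ n, i < (s n).length then (s (Nat.find h))[i]'(Nat.find_spec h)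
    else Classical.arbitrary X, fun n i hi => ?_⟩
  have h : ∃ n, i < (s n).length := ⟨n, hi⟩
  simp only [dif_pos h]
  exact (hmono (Nat.find_min' h hi)).getElem (Nat.find_spec h)

variable (R : (ℕ → X) → X → X → Prop)

def approxRel (p q : List X × X) : Prop :=
  q.1 <+: p.1 ∧ ∀ u, ExtendsList u p.1 → R u p.2 q.2

variable {R}

theorem wellFounded_approxRel (hR : ∀ u, WellFounded (R u)) : WellFounded (approxRel R) := by
  refine wellFounded_iff_isEmpty_descending_chain.2 ⟨fun ⟨f, hf⟩ => ?_⟩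
  have : Nonempty X := ⟨(f 0).2⟩
  obtain ⟨u, hu⟩ := exists_extendsList_of_prefix_succ fun n => (hf n).1
  exact (wellFounded_iff_isEmpty_descending_chain.1 (hR u)).false
    ⟨fun n => (f n).2, fun n => (hf n).2 u (hu (n + 1))⟩

theorem rank_le_rank_approxRel (hR : ∀ a b, IsOpen[seqTop X] {u | R u a b})
    [IsWellFounded _ (approxRel R)] (u : ℕ → X) [IsWellFounded X (R u)] {s : List X}
    (hs : ExtendsList u s) (a : X) :
    IsWellFounded.rank (R u) a ≤ IsWellFounded.rank (approxRel R) (s, a) := by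
  induction a using IsWellFounded.induction (R u) generalizing s with
  | _ a IH =>
    rw [IsWellFounded.rank_eq]
    refine Ordinal.iSup_le fun ⟨b, hba⟩ => Order.succ_le_of_lt ?_
    obtain ⟨n, hn⟩ := exists_cylinder_subset_of_isOpen_seqTop (hR b a) hba
    let t := List.ofFn fun i : Fin (max n s.length) => u i
    have hstep : approxRel R (t, b) (s, a) :=
      ⟨hs.prefix_ofFn (le_max_right _ _), fun v hv =>
        hn (cylinder_anti u (le_max_left _ _) (extendsList_ofFn_iff.1 hv))⟩
    exact (IH b hba (extendsList_ofFn_iff.2 (self_mem_cylinder u _))).trans_lt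
      (IsWellFounded.rank_lt_of_rel hstep)

end BoundednessOfOpenWellOrders

section RankBounds

variable {β : Type u} (r : β → β → Prop)

theorem IsWellFounded.rank_lt_ord_succ [IsWellFounded β r] {c : Cardinal.{u}} (hc : ℵ₀ ≤ c)
    (hβ : #β ≤ c) (a : β) : IsWellFounded.rank r a < (Order.succ c).ord := by
  induction a using IsWellFounded.induction r with
  | _ a IH =>
    rw [IsWellFounded.rank_eq]
    simp only [Order.succ_eq_add_one]
    refine Ordinal.iSup_add_one_lt_of_lt_cof ?_ fun b => IH b.1 b.2
    rw [(isRegular_succ hc).cof_ord]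
    exact (mk_subtype_le _).trans_lt (hβ.trans_lt (Order.lt_succ c))

theorem Ordinal.type_le_of_forall_rank_lt [IsWellOrder β r] {γ : Ordinal.{u}}
    (h : ∀ a, IsWellFounded.rank r a < γ) : type r ≤ γ := by
  by_contra! hγ
  obtain ⟨a, ha⟩ := typein_surj r hγ
  exact (h a).ne (by rw [IsWellFounded.rank_eq_typein, ha])

end RankBounds

theorem exists_lt_ord_succ_forall_type_lt {X : Type u} {R : (ℕ → X) → X → X → Prop}
    {κ : Cardinal.{u}} (hκ : ℵ₀ ≤ κ) (hX : #X ≤ κ)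
    (hR : ∀ a b, IsOpen[seqTop X] {u | R u a b}) (hwo : ∀ u, IsWellOrder X (R u)) :
    ∃ γ < (Order.succ κ).ord, ∀ u, @type X (R u) (hwo u) < γ := by
  have : IsWellFounded _ (approxRel R) := ⟨wellFounded_approxRel fun u => (hwo u).wf⟩
  have hcard : #(List X × X) ≤ κ := by
    rw [mk_prod, Cardinal.lift_id, Cardinal.lift_id]
    exact (mul_le_mul' ((mk_list_le_max X).trans (max_le hκ hX)) hX).trans
      (mul_eq_self hκ).le
  set γ := ⨆ p, IsWellFounded.rank (approxRel R) p + 1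
  have hγ : γ < (Order.succ κ).ord := by
    refine Ordinal.iSup_add_one_lt_of_lt_cof ?_ (IsWellFounded.rank_lt_ord_succ _ hκ hcard)
    rw [(isRegular_succ hκ).cof_ord]
    exact hcard.trans_lt (Order.lt_succ κ)
  refine ⟨γ + 1, (isSuccLimit_ord (hκ.trans (Order.le_succ κ))).add_one_lt hγ, fun u => ?_⟩
  have := hwo u
  refine Order.lt_add_one_iff.2 (type_le_of_forall_rank_lt _ fun a => ?_)
  calc IsWellFounded.rank (R u) a ≤ IsWellFounded.rank (approxRel R) ([], a) :=
        rank_le_rank_approxRel hR u (extendsList_nil u) a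
    _ < IsWellFounded.rank (approxRel R) ([], a) + 1 := lt_add_one _
    _ ≤ γ := Ordinal.le_iSup (fun p => IsWellFounded.rank (approxRel R) p + 1) ([], a)

theorem statement4_general (κ : Cardinal.{u}) (huncount : ℵ₀ < κ)
    (g : κ.ord.ToType × κ.ord.ToType ≃ κ.ord.ToType)
    (ι : (ℕ → κ.ord.ToType) → Set κ.ord.ToType)
    (hcont : @Continuous _ _ (seqTop κ.ord.ToType) (powTop κ) ι)
    (hwo : ∀ u : ℕ → κ.ord.ToType, IsWellOrder κ.ord.ToType (relOf g (ι u))) :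
    ∃ γ : Ordinal.{u}, γ < (Order.succ κ).ord ∧
      ∀ u : ℕ → κ.ord.ToType, @Ordinal.type κ.ord.ToType (relOf g (ι u)) (hwo u) < γ :=
  exists_lt_ord_succ_forall_type_lt huncount.le (mk_ord_toType κ).le
    (fun a b => @Continuous.isOpen_preimage _ _ (seqTop _) (powTop κ) ι hcont _
      (isOpen_setOf_mem_powTop huncount.le (g (a, b)))) hwo

/-- Let `κ` be a singular strong limit cardinal of countable cofinality,
represented by the type `κ.ord.ToType`, and fix a bijection `g : κ × κ ≃ κ`. For every
continuous function `ι : ᵚκ → 𝒫(κ)` all of whose values code well-orderings of `κ`, there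
is an ordinal `γ < κ⁺` bounding the order types of all the coded well-orderings. -/
theorem statement4 (κ : Cardinal.{u}) (huncount : ℵ₀ < κ)
    (hstronglimit : ∀ μ < κ, (2 : Cardinal.{u}) ^ μ < κ)
    (hcof : κ.ord.cof = ℵ₀)
    (g : κ.ord.ToType × κ.ord.ToType ≃ κ.ord.ToType)
    (ι : (ℕ → κ.ord.ToType) → Set κ.ord.ToType)
    (hcont : @Continuous _ _ (seqTop κ.ord.ToType) (powTop κ) ι)
    (hwo : ∀ u : ℕ → κ.ord.ToType, IsWellOrder κ.ord.ToType (relOf g (ι u))) :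
    ∃ γ : Ordinal.{u}, γ < (Order.succ κ).ord ∧
      ∀ u : ℕ → κ.ord.ToType, @Ordinal.type κ.ord.ToType (relOf g (ι u)) (hwo u) < γ :=
  statement4_general κ huncount g ι hcont hwo
end

section
/- Let κ be a singular strong limit cardinal of countable cofinality, fix a bijection g : κ × κ → κ, and let D ⊆ WO_κ be a set on which the map z ↦ otp(z) is injective (distinct elements of D code well-orderings of distinct order types). Then there is no continuous injection ι : ᵚκ → 𝒫(κ) with ran(ι) ⊆ D. -/
universe u

open Cardinal

namespace Statement5

variable {α : Type u}

/-- Given a bijection `g : κ × κ ≃ κ` and a subset `z ⊆ κ`, the binary relation `⊲_z` on `κ`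
given by `a ⊲_z b ↔ g(a, b) ∈ z`. -/
def relOf (g : α × α ≃ α) (z : Set α) : α → α → Prop :=
  fun a b => g (a, b) ∈ z

/-- The canonical ordinal index (below `κ.ord`) of an element of `κ.ord.ToType`. -/
noncomputable def idx (κ : Cardinal.{u}) (b : κ.ord.ToType) : Ordinal.{u} :=
  ((Ordinal.ToType.mk (o := κ.ord)).symm b : Set.Iio κ.ord)

/-- The topology on `ᵚκ` whose basic open sets consist of all functions extending a given
finite sequence. -/
def seqTop (α : Type u) : TopologicalSpace (ℕ → α) :=
  TopologicalSpace.generateFrom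
    {S | ∃ (n : ℕ) (s : ℕ → α), S = {f | ∀ i < n, f i = s i}}

/-- The topology on `𝒫(κ)` whose basic open sets consist of all subsets of `κ` whose
intersection with a given ordinal `η < κ` equals a fixed subset of `η`. -/
noncomputable def powTop (κ : Cardinal.{u}) : TopologicalSpace (Set κ.ord.ToType) :=
  TopologicalSpace.generateFrom
    {S | ∃ (η : Ordinal.{u}) (a : Set κ.ord.ToType), η < κ.ord ∧ (∀ b ∈ a, idx κ b < η) ∧
      S = {y | {b | b ∈ y ∧ idx κ b < η} = a}}

end Statement5

open Statement5

/-!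
Suppose `ι` is such an injection. As `cof κ = ω`, König's theorem gives `|ᵚκ| = κ^ω > κ`, so the
order types of the codes `ι f`, being pairwise distinct, are unbounded in `κ⁺`. Continuity of `ι`
means that whether `a ⊲_{ι f} b` holds depends only on a finite initial segment of `f`.

Call a pair `(s, b)` of a finite sequence and a point big if the ranks of `b` in the codes `ι f`,
`f ⊇ s`, are unbounded in `κ⁺`. Since `κ⁺` is regular and there are only `κ` such pairs, some
`(∅, b₀)` is big, and every big `(s, b)` has a big proper extension `(t, b')` such that
`b' ⊲_{ι f} b` for every `f ⊇ t`. Iterating yields a branch `f` and a sequence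
`b₀ ⊳ b₁ ⊳ ⋯` in the well-order coded by `ι f`, which is absurd.
-/

open Cardinal Ordinal Topology Function

namespace Statement5

section Cylinders

variable {α β : Type u}

def cyl (s : List β) : Set (ℕ → β) :=
  {f | ∀ (i : ℕ) (h : i < s.length), f i = s[i]}

theorem mem_cyl_ofFn {f f' : ℕ → β} {n : ℕ} :
    f' ∈ cyl (List.ofFn fun i : Fin n => f i) ↔ ∀ i < n, f' i = f i := by
  simp [cyl]

theorem exists_mem_cyl_of_prefix_chain {s : ℕ → List β} (hprefix : ∀ n, s n <+: s (n + 1))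
    (hlen : ∀ n, (s n).length < (s (n + 1)).length) : ∃ f, ∀ n, f ∈ cyl (s n) := by
  have hmono : ∀ m n, m ≤ n → s m <+: s n := fun m n hmn => by
    induction n, hmn using Nat.le_induction with
    | base => exact List.prefix_refl _
    | succ n _ ih => exact ih.trans (hprefix n)
  have hlen_ge : ∀ n, n ≤ (s n).length := fun n => by
    induction n with
    | zero => exact Nat.zero_le _
    | succ n ih => exact ih.trans_lt (hlen n)
  refine ⟨fun i => (s (i + 1))[i]'(hlen_ge (i + 1)), fun n i hi => ?_⟩
  rcases le_total (i + 1) n with h | h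
  · exact (hmono _ _ h).getElem _
  · exact ((hmono _ _ h).getElem hi).symm

theorem exists_agree_subset_of_isOpen {U : Set (ℕ → β)} (hU : IsOpen[seqTop β] U)
    {f : ℕ → β} (hf : f ∈ U) : ∃ n, ∀ f', (∀ i < n, f' i = f i) → f' ∈ U := by
  induction hU with
  | basic S hS =>
    obtain ⟨n, s, rfl⟩ := hS
    exact ⟨n, fun f' h i hi => (h i hi).trans (hf i hi)⟩
  | univ => exact ⟨0, fun _ _ => trivial⟩
  | inter U V _ _ ihU ihV =>
    obtain ⟨n, hn⟩ := ihU hf.1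
    obtain ⟨m, hm⟩ := ihV hf.2
    exact ⟨max n m, fun f' h => ⟨hn f' fun i hi => h i (hi.trans_le (le_max_left _ _)),
      hm f' fun i hi => h i (hi.trans_le (le_max_right _ _))⟩⟩
  | sUnion S _ ih =>
    obtain ⟨t, ht, hft⟩ := hf
    obtain ⟨n, hn⟩ := ih t ht hft
    exact ⟨n, fun f' h => ⟨t, ht, hn f' h⟩⟩

def IsLocallyDetermined (R : (ℕ → β) → α → α → Prop) : Prop :=
  ∀ f a b, ∃ n, ∀ f', (∀ i < n, f' i = f i) → (R f' a b ↔ R f a b)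

end Cylinders

theorem isLocallyDetermined_relOf {κ : Cardinal.{u}} (hκ : ℵ₀ ≤ κ)
    {g : κ.ord.ToType × κ.ord.ToType ≃ κ.ord.ToType}
    {ι : (ℕ → κ.ord.ToType) → Set κ.ord.ToType}
    (hι : Continuous[seqTop κ.ord.ToType, powTop κ] ι) :
    IsLocallyDetermined fun f => relOf g (ι f) := by
  intro f a b
  set c := g (a, b)
  set η := Order.succ (idx κ c)
  have hη : η < κ.ord :=
    (isSuccLimit_ord hκ).succ_lt ((Ordinal.ToType.mk (o := κ.ord)).symm c).2
  let V : Set (Set κ.ord.ToType) :=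
    {y | {x | x ∈ y ∧ idx κ x < η} = {x | x ∈ ι f ∧ idx κ x < η}}
  have hV : IsOpen[powTop κ] V :=
    .basic _ ⟨η, _, hη, fun _ hx => hx.2, rfl⟩
  obtain ⟨n, hn⟩ := exists_agree_subset_of_isOpen
    (@Continuous.isOpen_preimage _ _ (seqTop _) (powTop κ) ι hι V hV) (show ι f ∈ V from rfl)
  refine ⟨n, fun f' hf' => ?_⟩
  simpa [η, c, relOf] using Set.ext_iff.1 (hn f' hf') c

section Fusion

variable {c : Cardinal.{u}} {α β : Type u} {R : (ℕ → β) → α → α → Prop}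
  [∀ f, IsWellOrder α (R f)]

variable (c R) in
def RanksUnbounded (s : List β) (b : α) : Prop :=
  ∀ γ < c.ord, ∃ f ∈ cyl s, γ ≤ typein (R f) b

theorem exists_uniform_bound {ι : Type u} (hc : c.IsRegular) (hι : #ι < c)
    (t : ι → List β) (b : ι → α) (h : ∀ i, ¬ RanksUnbounded c R (t i) (b i)) :
    ∃ Γ < c.ord, ∀ i, ∀ f ∈ cyl (t i), typein (R f) (b i) < Γ := by
  have hbound : ∀ i, ∃ γ < c.ord, ∀ f ∈ cyl (t i), typein (R f) (b i) < γ := fun i => by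
    simpa [RanksUnbounded] using h i
  choose G hG hGb using hbound
  exact ⟨⨆ i, G i, iSup_lt_of_lt_cof (by rwa [hc.cof_ord]) hG,
    fun i f hf => (hGb i f hf).trans_le (Ordinal.le_iSup G i)⟩

theorem exists_ranksUnbounded_nil (hc : c.IsRegular) (hα : #α < c)
    (htype : ∀ γ < c.ord, ∃ f, γ < type (R f)) : ∃ b, RanksUnbounded c R [] b := by
  by_contra! hno
  obtain ⟨Γ, hΓ, hbound⟩ := exists_uniform_bound hc hα (fun _ => []) id hno
  obtain ⟨f, hf⟩ := htype Γ hΓ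
  obtain ⟨b, hb⟩ := typein_surj (R f) hf
  exact (hbound b f (by simp [cyl])).ne hb

theorem RanksUnbounded.exists_extension (hc : c.IsRegular) (hα : #α < c) (hβ : #(List β) < c)
    (hR : IsLocallyDetermined R) {s : List β} {b : α} (hsb : RanksUnbounded c R s b) :
    ∃ t b', s <+: t ∧ s.length < t.length ∧ (∀ f ∈ cyl t, R f b' b) ∧
      RanksUnbounded c R t b' := by
  by_contra! hno
  let Ext :=
    {p : List β × α // s <+: p.1 ∧ s.length < p.1.length ∧ ∀ f ∈ cyl p.1, R f p.2 b}
  have hExt : #Ext < c := (mk_subtype_le _).trans_lt <| by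
    rw [mk_prod, Cardinal.lift_id, Cardinal.lift_id]
    exact mul_lt_of_lt hc.aleph0_le hβ hα
  obtain ⟨Γ, hΓ, hbound⟩ := exists_uniform_bound hc hExt (fun p => p.1.1) (fun p => p.1.2)
    fun p => hno _ _ p.2.1 p.2.2.1 p.2.2.2
  obtain ⟨f, hfs, hΓb⟩ := hsb _ ((isSuccLimit_ord hc.aleph0_le).succ_lt hΓ)
  have hΓb : Γ < typein (R f) b := Order.succ_le_iff.1 hΓb
  obtain ⟨b', hb'⟩ := typein_surj (R f) (hΓb.trans (typein_lt_type _ b))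
  have hb'b : R f b' b := (typein_lt_typein (R f)).1 (hb' ▸ hΓb)
  obtain ⟨n, hn⟩ := hR f b' b
  set N := max n (s.length + 1)
  let t := List.ofFn fun i : Fin N => f i
  have hst : s <+: t := by
    rw [List.prefix_iff_eq_take]
    refine List.ext_getElem (by simp [t, N]) fun i hi _ => ?_
    simp [t, hfs i hi]
  have hext : ∀ f' ∈ cyl t, R f' b' b := fun f' hf' =>
    (hn f' fun i hi => mem_cyl_ofFn.1 hf' i (hi.trans_le (le_max_left _ _))).2 hb'b
  exact (hbound ⟨(t, b'), hst, by simp [t, N], hext⟩ f (mem_cyl_ofFn.2 fun _ _ => rfl)).ne hb'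

theorem not_forall_exists_lt_type (hc : c.IsRegular) (hα : #α < c) (hβ : #(List β) < c)
    (hR : IsLocallyDetermined R) : ¬ ∀ γ < c.ord, ∃ f, γ < type (R f) := by
  intro htype
  obtain ⟨b₀, hb₀⟩ := exists_ranksUnbounded_nil hc hα htype
  let Node := {p : List β × α // RanksUnbounded c R p.1 p.2}
  choose t b' hprefix hlen hrel hunb using
    fun p : Node => p.2.exists_extension hc hα hβ hR
  let next : Node → Node := fun p => ⟨(t p, b' p), hunb p⟩
  let node : ℕ → Node := fun n => next^[n] ⟨([], b₀), hb₀⟩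
  have hnode (n : ℕ) : (node (n + 1)).1 = (t (node n), b' (node n)) :=
    congrArg Subtype.val (iterate_succ_apply' _ _ _)
  obtain ⟨f, hf⟩ := exists_mem_cyl_of_prefix_chain (s := fun n => (node n).1.1)
    (fun n => by rw [hnode]; exact hprefix _) (fun n => by rw [hnode]; exact hlen _)
  obtain ⟨n, hn⟩ := WellFounded.not_rel_apply_succ (r := R f) fun n => (node n).1.2
  have hfn : f ∈ cyl (t (node n)) := by simpa only [hnode] using hf (n + 1)
  exact hn (by rw [hnode]; exact hrel _ f hfn)

end Fusion

theorem exists_lt_apply_of_injective {κ : Cardinal.{u}} (hκ : ℵ₀ ≤ κ) {X : Type u}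
    {F : X → Ordinal.{u}} (hF : Injective F) (hX : κ < #X) {γ : Ordinal.{u}}
    (hγ : γ < (Order.succ κ).ord) : ∃ x, γ < F x := by
  by_contra! h
  have hinj : Injective fun x => ToType.mk (o := Order.succ γ)
      ⟨F x, Order.lt_succ_iff.2 (h x)⟩ :=
    fun x y hxy => hF (congrArg Subtype.val ((ToType.mk (o := Order.succ γ)).injective hxy))
  have hγκ : (Order.succ γ).card ≤ κ :=
    Order.lt_succ_iff.1 <| lt_ord.1 <|
      (isSuccLimit_ord (hκ.trans (Order.le_succ κ))).succ_lt hγ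
  exact (((mk_le_of_injective hinj).trans_eq (mk_toType _)).trans hγκ).not_gt hX

theorem lt_mk_nat_arrow_toType {κ : Cardinal.{u}} (hκ : ℵ₀ ≤ κ)
    (hcof : κ.ord.cof = ℵ₀) : κ < #(ℕ → κ.ord.ToType) := by
  simpa [mk_arrow, hcof] using lt_power_cof_ord hκ

end Statement5

theorem statement5_general (κ : Cardinal.{u}) (huncount : ℵ₀ < κ)
    (hcof : κ.ord.cof = ℵ₀)
    (g : κ.ord.ToType × κ.ord.ToType ≃ κ.ord.ToType)
    (D : Set (Set κ.ord.ToType))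
    (hD : ∀ z ∈ D, IsWellOrder κ.ord.ToType (relOf g z))
    (hotpinj : ∀ z₁, ∀ h₁ : z₁ ∈ D, ∀ z₂, ∀ h₂ : z₂ ∈ D,
      @Ordinal.type κ.ord.ToType (relOf g z₁) (hD z₁ h₁) =
        @Ordinal.type κ.ord.ToType (relOf g z₂) (hD z₂ h₂) → z₁ = z₂) :
    ¬ ∃ ι : (ℕ → κ.ord.ToType) → Set κ.ord.ToType,
        @Continuous _ _ (seqTop κ.ord.ToType) (powTop κ) ι ∧
        Function.Injective ι ∧ Set.range ι ⊆ D := by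
  rintro ⟨ι, hcont, hinj, hsub⟩
  have hwo (f : ℕ → κ.ord.ToType) : IsWellOrder _ (relOf g (ι f)) := hD _ (hsub ⟨f, rfl⟩)
  have htype_inj : Injective fun f => type (relOf g (ι f)) := fun f f' h =>
    hinj (hotpinj _ (hsub ⟨f, rfl⟩) _ (hsub ⟨f', rfl⟩) h)
  have hκ : ℵ₀ ≤ κ := huncount.le
  have : Infinite κ.ord.ToType := infinite_iff.2 (by rwa [mk_ord_toType])
  exact not_forall_exists_lt_type (R := fun f => relOf g (ι f)) (isRegular_succ hκ) (by simp)
    (by simp [mk_list_eq_mk]) (isLocallyDetermined_relOf hκ hcont) fun γ hγ =>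
      exists_lt_apply_of_injective hκ htype_inj (lt_mk_nat_arrow_toType hκ hcof) hγ

/-- Let `κ` be a singular strong limit cardinal of countable cofinality,
represented by the type `κ.ord.ToType`, fix a bijection `g : κ × κ ≃ κ`, and let
`D ⊆ WO_κ` be a set of codes of well-orderings of `κ` on which the order type map is
injective. Then there is no continuous injection `ι : ᵚκ → 𝒫(κ)` with `ran(ι) ⊆ D`. -/
theorem statement5 (κ : Cardinal.{u}) (huncount : ℵ₀ < κ)
    (hstronglimit : ∀ μ < κ, (2 : Cardinal.{u}) ^ μ < κ)
    (hcof : κ.ord.cof = ℵ₀)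
    (g : κ.ord.ToType × κ.ord.ToType ≃ κ.ord.ToType)
    (D : Set (Set κ.ord.ToType))
    (hD : ∀ z ∈ D, IsWellOrder κ.ord.ToType (relOf g z))
    (hotpinj : ∀ z₁, ∀ h₁ : z₁ ∈ D, ∀ z₂, ∀ h₂ : z₂ ∈ D,
      @Ordinal.type κ.ord.ToType (relOf g z₁) (hD z₁ h₁) =
        @Ordinal.type κ.ord.ToType (relOf g z₂) (hD z₂ h₂) → z₁ = z₂) :
    ¬ ∃ ι : (ℕ → κ.ord.ToType) → Set κ.ord.ToType,
        @Continuous _ _ (seqTop κ.ord.ToType) (powTop κ) ι ∧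
        Function.Injective ι ∧ Set.range ι ⊆ D :=
  statement5_general κ huncount hcof g D hD hotpinj
end

section
/- Let μ be an infinite regular cardinal, let κ be a cardinal of cofinality μ, and let ⟨κ_s : s ∈ ^{<μ}κ⟩ be a system of ordinals below κ such that (i) κ_s < κ_t whenever s ⊊ t, and (ii) for every c ∈ ^μκ, the sequence ⟨κ_{c↾ξ} : ξ < μ⟩ is cofinal in κ. Suppose ι : ^μκ → 𝒫(κ) is a function such that (iii) for all c, d ∈ ^μκ and ξ < μ, if c↾ξ = d↾ξ then ι(c) ∩ κ_{c↾ξ} = ι(d) ∩ κ_{c↾ξ}, and (iv) for all c, d ∈ ^μκ and ξ < μ, if c↾ξ = d↾ξ and c(ξ) ≠ d(ξ), then ι(c) ∩ ρ ≠ ι(d) ∩ ρ, where ρ = min(κ_{c↾(ξ+1)}, κ_{d↾(ξ+1)}). Then ι is a perfect embedding: it is injective and a homeomorphism onto its range. -/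
universe u

open Cardinal

namespace Statement6

/-- The canonical ordinal index (below `ν.ord`) of an element of `ν.ord.toType`. -/
noncomputable def idx (ν : Cardinal.{u}) (b : ν.ord.ToType) : Ordinal.{u} :=
  ((Ordinal.ToType.mk (o := ν.ord)).symm b : Set.Iio ν.ord)

/-- The topology on `^μκ` whose basic open sets consist of all functions extending a given
function `s : ξ → κ` with `ξ < μ`. -/
noncomputable def funTop (μ κ : Cardinal.{u}) :
    TopologicalSpace (μ.ord.ToType → κ.ord.ToType) :=
  TopologicalSpace.generateFrom
    {S | ∃ (ξ : Ordinal.{u}) (s : μ.ord.ToType → κ.ord.ToType), ξ < μ.ord ∧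
      S = {f | ∀ η : μ.ord.ToType, idx μ η < ξ → f η = s η}}

/-- The topology on `𝒫(κ)` whose basic open sets consist of all subsets of `κ` whose
intersection with a given ordinal `η < κ` equals a fixed subset of `η`. -/
noncomputable def powTop (κ : Cardinal.{u}) : TopologicalSpace (Set κ.ord.ToType) :=
  TopologicalSpace.generateFrom
    {S | ∃ (η : Ordinal.{u}) (a : Set κ.ord.ToType), η < κ.ord ∧ (∀ b ∈ a, idx κ b < η) ∧
      S = {y | {b | b ∈ y ∧ idx κ b < η} = a}}

end Statement6

open Statement6 Topology

/-! Two points `c ≠ d` of `^μκ` first differ at some `ζ`; condition (iv) then separates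
`ι c` from `ι d` below `κ_{c↾(ζ+1)}`, which gives injectivity and, since `κ_{c↾ξ}` grows with `ξ`,
shows that `ι c ∩ κ_{c↾ξ}` determines `c↾ξ` on the range of `ι`. Hence the basic neighbourhood
`{y | y ∩ κ_{c↾ξ} = ι c ∩ κ_{c↾ξ}}` of `ι c` pulls back exactly to the cylinder of `c↾ξ`, so `ι`
is open onto its range; conversely (iii) and the cofinality (ii) make `ι` continuous. -/

theorem exists_first_ne {α β : Type*} [LinearOrder α] [WellFoundedLT α] {c d : α → β} {ζ₀ : α}
    (h : c ζ₀ ≠ d ζ₀) : ∃ ζ ≤ ζ₀, c ζ ≠ d ζ ∧ ∀ η < ζ, c η = d η := by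
  obtain ⟨ζ, hζ, hmin⟩ := wellFounded_lt.has_min {ζ | c ζ ≠ d ζ} ⟨ζ₀, h⟩
  exact ⟨ζ, not_lt.mp (hmin ζ₀ h), hζ, fun η hη => by_contra fun hne => hmin η hne hη⟩

theorem exists_isOpen_image_eq_inter_range {X Y : Type*} [TopologicalSpace Y] {f : X → Y}
    {O : Set X} (h : ∀ x ∈ O, ∃ W, IsOpen W ∧ f x ∈ W ∧ W ∩ Set.range f ⊆ f '' O) :
    ∃ V : Set Y, IsOpen V ∧ f '' O = V ∩ Set.range f := by
  refine ⟨⋃₀ {W | IsOpen W ∧ W ∩ Set.range f ⊆ f '' O}, isOpen_sUnion fun W hW => hW.1, ?_⟩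
  refine Set.Subset.antisymm ?_ ?_
  · rintro _ ⟨x, hx, rfl⟩
    obtain ⟨W, hW, hxW, hsub⟩ := h x hx
    exact ⟨⟨W, ⟨hW, hsub⟩, hxW⟩, x, rfl⟩
  · rintro y ⟨⟨W, ⟨_, hsub⟩, hyW⟩, hy⟩
    exact hsub ⟨hyW, hy⟩

namespace Statement6

theorem idx_strictMono (ν : Cardinal.{u}) : StrictMono (idx ν) := fun _ _ h => by
  exact_mod_cast (Ordinal.ToType.mk (o := ν.ord)).symm.lt_iff_lt.mpr h

def cylinder {μ : Cardinal.{u}} {β : Type*} (c : μ.ord.ToType → β) (ξ : Ordinal.{u}) :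
    Set (μ.ord.ToType → β) :=
  {f | ∀ η : μ.ord.ToType, idx μ η < ξ → f η = c η}

def trunc (κ : Cardinal.{u}) (y : Set κ.ord.ToType) (η : Ordinal.{u}) : Set κ.ord.ToType :=
  {b | b ∈ y ∧ idx κ b < η}

theorem mem_cylinder_self {μ : Cardinal.{u}} {β : Type*} (c : μ.ord.ToType → β) (ξ : Ordinal) :
    c ∈ cylinder c ξ := fun _ _ => rfl

theorem trunc_eq_of_le {κ : Cardinal.{u}} {y z : Set κ.ord.ToType} {η η' : Ordinal.{u}}
    (h : trunc κ y η = trunc κ z η) (hle : η' ≤ η) : trunc κ y η' = trunc κ z η' := by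
  ext b
  have hb := Set.ext_iff.mp h b
  exact ⟨fun ⟨hm, hlt⟩ => ⟨(hb.mp ⟨hm, hlt.trans_le hle⟩).1, hlt⟩,
    fun ⟨hm, hlt⟩ => ⟨(hb.mpr ⟨hm, hlt.trans_le hle⟩).1, hlt⟩⟩

variable {μ κ : Cardinal.{u}}

theorem isOpen_cylinder (c : μ.ord.ToType → κ.ord.ToType) {ξ : Ordinal.{u}} (hξ : ξ < μ.ord) :
    IsOpen[funTop μ κ] (cylinder c ξ) :=
  TopologicalSpace.isOpen_generateFrom_of_mem ⟨ξ, c, hξ, rfl⟩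

theorem exists_cylinder_subset_of_isOpen (hμ : 0 < μ) {U : Set (μ.ord.ToType → κ.ord.ToType)}
    (hU : IsOpen[funTop μ κ] U) : ∀ c ∈ U, ∃ ξ < μ.ord, cylinder c ξ ⊆ U := by
  induction hU with
  | basic S hS =>
    obtain ⟨ξ, s, hξ, rfl⟩ := hS
    exact fun c hc => ⟨ξ, hξ, fun f hf η hη => (hf η hη).trans (hc η hη)⟩
  | univ => exact fun c _ => ⟨0, Cardinal.ord_pos.mpr hμ, Set.subset_univ _⟩
  | inter U V _ _ ihU ihV =>
    intro c hc
    obtain ⟨ξ₁, hξ₁, hU⟩ := ihU c hc.1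
    obtain ⟨ξ₂, hξ₂, hV⟩ := ihV c hc.2
    refine ⟨max ξ₁ ξ₂, max_lt hξ₁ hξ₂, fun f hf => ⟨hU ?_, hV ?_⟩⟩
    · exact fun η hη => hf η (hη.trans_le (le_max_left _ _))
    · exact fun η hη => hf η (hη.trans_le (le_max_right _ _))
  | sUnion S _ ih =>
    rintro c ⟨U, hUS, hcU⟩
    obtain ⟨ξ, hξ, hsub⟩ := ih U hUS c hcU
    exact ⟨ξ, hξ, hsub.trans (Set.subset_sUnion_of_mem hUS)⟩

theorem isOpen_setOf_trunc_eq {η : Ordinal.{u}} (hη : η < κ.ord) (z : Set κ.ord.ToType) :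
    IsOpen[powTop κ] {y | trunc κ y η = trunc κ z η} :=
  TopologicalSpace.isOpen_generateFrom_of_mem ⟨η, trunc κ z η, hη, fun _ hb => hb.2, rfl⟩

variable {F : (μ.ord.ToType → κ.ord.ToType) → Ordinal.{u} → Ordinal.{u}}
  {ι : (μ.ord.ToType → κ.ord.ToType) → Set κ.ord.ToType}

theorem injective_of_split
    (hsplit : ∀ c d : μ.ord.ToType → κ.ord.ToType, ∀ ξ : μ.ord.ToType,
      (∀ η : μ.ord.ToType, η < ξ → c η = d η) → c ξ ≠ d ξ →
      {b | b ∈ ι c ∧ idx κ b < min (F c (idx μ ξ + 1)) (F d (idx μ ξ + 1))} ≠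
        {b | b ∈ ι d ∧ idx κ b < min (F c (idx μ ξ + 1)) (F d (idx μ ξ + 1))}) :
    Function.Injective ι := by
  intro c d h
  by_contra hne
  obtain ⟨ζ₀, hζ₀⟩ := Function.ne_iff.mp hne
  obtain ⟨ζ, -, hcd, hagree⟩ := exists_first_ne hζ₀
  exact hsplit c d ζ hagree hcd (by rw [h])

theorem mem_cylinder_of_trunc_eq
    (hFmono : ∀ c : μ.ord.ToType → κ.ord.ToType, ∀ ξ ζ : Ordinal.{u},
      ξ < ζ → ζ < μ.ord → F c ξ < F c ζ)
    (hsplit : ∀ c d : μ.ord.ToType → κ.ord.ToType, ∀ ξ : μ.ord.ToType,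
      (∀ η : μ.ord.ToType, η < ξ → c η = d η) → c ξ ≠ d ξ →
      {b | b ∈ ι c ∧ idx κ b < min (F c (idx μ ξ + 1)) (F d (idx μ ξ + 1))} ≠
        {b | b ∈ ι d ∧ idx κ b < min (F c (idx μ ξ + 1)) (F d (idx μ ξ + 1))})
    {c d : μ.ord.ToType → κ.ord.ToType} {ξ : Ordinal.{u}} (hξ : ξ < μ.ord)
    (h : trunc κ (ι c) (F c ξ) = trunc κ (ι d) (F c ξ)) : d ∈ cylinder c ξ := by
  intro η hη
  by_contra hne
  obtain ⟨ζ, hζη, hcd, hagree⟩ := exists_first_ne (Ne.symm hne)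
  have hζξ : idx μ ζ < ξ := ((idx_strictMono μ).monotone hζη).trans_lt hη
  have hF : F c (idx μ ζ + 1) ≤ F c ξ := by
    rcases (Order.add_one_le_of_lt hζξ).lt_or_eq with hlt | heq
    · exact (hFmono c _ _ hlt hξ).le
    · rw [heq]
  exact hsplit c d ζ hagree hcd (trunc_eq_of_le h ((min_le_left _ _).trans hF))

theorem continuous_of_trunc_eq
    (hFcof : ∀ c : μ.ord.ToType → κ.ord.ToType, ∀ o < κ.ord, ∃ ξ < μ.ord, o < F c ξ)
    (hsame : ∀ c d : μ.ord.ToType → κ.ord.ToType, ∀ ξ < μ.ord,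
      (∀ η : μ.ord.ToType, idx μ η < ξ → c η = d η) →
      {b | b ∈ ι c ∧ idx κ b < F c ξ} = {b | b ∈ ι d ∧ idx κ b < F c ξ}) :
    Continuous[funTop μ κ, powTop κ] ι := by
  let _ := funTop μ κ
  refine continuous_generateFrom_iff.mpr ?_
  rintro _ ⟨η, a, hη, -, rfl⟩
  refine isOpen_iff_forall_mem_open.mpr fun c hc => ?_
  obtain ⟨ξ, hξ, hηξ⟩ := hFcof c η hη
  refine ⟨cylinder c ξ, fun d hd => ?_, isOpen_cylinder c hξ, mem_cylinder_self c ξ⟩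
  have hcd := trunc_eq_of_le (hsame c d ξ hξ fun η' hη' => (hd η' hη').symm) hηξ.le
  exact hcd.symm.trans hc

theorem exists_isOpen_image_eq_inter_range_of_split (hμ : 0 < μ)
    (hFlt : ∀ c : μ.ord.ToType → κ.ord.ToType, ∀ ξ < μ.ord, F c ξ < κ.ord)
    (hFmono : ∀ c : μ.ord.ToType → κ.ord.ToType, ∀ ξ ζ : Ordinal.{u},
      ξ < ζ → ζ < μ.ord → F c ξ < F c ζ)
    (hsplit : ∀ c d : μ.ord.ToType → κ.ord.ToType, ∀ ξ : μ.ord.ToType,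
      (∀ η : μ.ord.ToType, η < ξ → c η = d η) → c ξ ≠ d ξ →
      {b | b ∈ ι c ∧ idx κ b < min (F c (idx μ ξ + 1)) (F d (idx μ ξ + 1))} ≠
        {b | b ∈ ι d ∧ idx κ b < min (F c (idx μ ξ + 1)) (F d (idx μ ξ + 1))})
    {O : Set (μ.ord.ToType → κ.ord.ToType)} (hO : IsOpen[funTop μ κ] O) :
    ∃ V : Set (Set κ.ord.ToType), IsOpen[powTop κ] V ∧ ι '' O = V ∩ Set.range ι := by
  let _ := powTop κ
  refine exists_isOpen_image_eq_inter_range fun c hc => ?_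
  obtain ⟨ξ, hξ, hsub⟩ := exists_cylinder_subset_of_isOpen hμ hO c hc
  refine ⟨{y | trunc κ y (F c ξ) = trunc κ (ι c) (F c ξ)},
    isOpen_setOf_trunc_eq (hFlt c ξ hξ) _, rfl, ?_⟩
  rintro _ ⟨hy, d, rfl⟩
  exact ⟨d, hsub (mem_cylinder_of_trunc_eq hFmono hsplit hξ hy.symm), rfl⟩

end Statement6

theorem statement6_general (μ κ : Cardinal.{u}) (hμ : μ.IsRegular)
    (F : (μ.ord.ToType → κ.ord.ToType) → Ordinal.{u} → Ordinal.{u})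
    -- the `κ_s` are ordinals below `κ`
    (hFlt : ∀ c : μ.ord.ToType → κ.ord.ToType, ∀ ξ < μ.ord, F c ξ < κ.ord)
    -- (i) `κ_s < κ_t` whenever `s ⊊ t`
    (hFmono : ∀ c : μ.ord.ToType → κ.ord.ToType, ∀ ξ ζ : Ordinal.{u},
      ξ < ζ → ζ < μ.ord → F c ξ < F c ζ)
    -- (ii) for every `c ∈ ^μκ`, the sequence `⟨κ_{c↾ξ} : ξ < μ⟩` is cofinal in `κ`
    (hFcof : ∀ c : μ.ord.ToType → κ.ord.ToType, ∀ o < κ.ord, ∃ ξ < μ.ord, o < F c ξ)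
    (ι : (μ.ord.ToType → κ.ord.ToType) → Set κ.ord.ToType)
    -- (iii)
    (hsame : ∀ c d : μ.ord.ToType → κ.ord.ToType, ∀ ξ < μ.ord,
      (∀ η : μ.ord.ToType, idx μ η < ξ → c η = d η) →
      {b | b ∈ ι c ∧ idx κ b < F c ξ} = {b | b ∈ ι d ∧ idx κ b < F c ξ})
    -- (iv)
    (hsplit : ∀ c d : μ.ord.ToType → κ.ord.ToType, ∀ ξ : μ.ord.ToType,
      (∀ η : μ.ord.ToType, η < ξ → c η = d η) → c ξ ≠ d ξ →
      {b | b ∈ ι c ∧ idx κ b < min (F c (idx μ ξ + 1)) (F d (idx μ ξ + 1))} ≠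
        {b | b ∈ ι d ∧ idx κ b < min (F c (idx μ ξ + 1)) (F d (idx μ ξ + 1))}) :
    Function.Injective ι ∧
      @Continuous _ _ (funTop μ κ) (powTop κ) ι ∧
      ∀ O : Set (μ.ord.ToType → κ.ord.ToType), @IsOpen _ (funTop μ κ) O →
        ∃ V : Set (Set κ.ord.ToType), @IsOpen _ (powTop κ) V ∧
          ι '' O = V ∩ Set.range ι :=
  ⟨injective_of_split hsplit, continuous_of_trunc_eq hFcof hsame,
    fun _ hO => exists_isOpen_image_eq_inter_range_of_split hμ.pos hFlt hFmono hsplit hO⟩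

/-- Let `μ` be an infinite regular cardinal, let `κ` be a cardinal of
cofinality `μ`, both represented by their canonical types `μ.ord.toType` and `κ.ord.toType`,
and let `⟨κ_s : s ∈ ^{<μ}κ⟩` be a system of ordinals below `κ`, presented by a function `F`
on pairs `(c, ξ)` (with value `κ_{c↾ξ}`) that depends only on the restriction `c↾ξ`, such that
(i) `κ_s < κ_t` whenever `s ⊊ t`, and (ii) for every `c ∈ ^μκ` the sequence
`⟨κ_{c↾ξ} : ξ < μ⟩` is cofinal in `κ`. Suppose `ι : ^μκ → 𝒫(κ)` is a function such that
(iii) if `c↾ξ = d↾ξ` then `ι(c) ∩ κ_{c↾ξ} = ι(d) ∩ κ_{c↾ξ}`, and (iv) if `c↾ξ = d↾ξ` and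
`c(ξ) ≠ d(ξ)` then `ι(c) ∩ ρ ≠ ι(d) ∩ ρ` where `ρ = min(κ_{c↾(ξ+1)}, κ_{d↾(ξ+1)})`.
Then `ι` is a perfect embedding: it is injective and a homeomorphism onto its range. -/
theorem statement6 (μ κ : Cardinal.{u}) (hμ : μ.IsRegular) (hcof : κ.ord.cof = μ)
    (F : (μ.ord.ToType → κ.ord.ToType) → Ordinal.{u} → Ordinal.{u})
    -- `F c ξ` represents `κ_{c↾ξ}`: it only depends on the restriction of `c` to `ξ`
    (hFresp : ∀ c d : μ.ord.ToType → κ.ord.ToType, ∀ ξ : Ordinal.{u},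
      (∀ η : μ.ord.ToType, idx μ η < ξ → c η = d η) → F c ξ = F d ξ)
    -- the `κ_s` are ordinals below `κ`
    (hFlt : ∀ c : μ.ord.ToType → κ.ord.ToType, ∀ ξ < μ.ord, F c ξ < κ.ord)
    -- (i) `κ_s < κ_t` whenever `s ⊊ t`
    (hFmono : ∀ c : μ.ord.ToType → κ.ord.ToType, ∀ ξ ζ : Ordinal.{u},
      ξ < ζ → ζ < μ.ord → F c ξ < F c ζ)
    -- (ii) for every `c ∈ ^μκ`, the sequence `⟨κ_{c↾ξ} : ξ < μ⟩` is cofinal in `κ`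
    (hFcof : ∀ c : μ.ord.ToType → κ.ord.ToType, ∀ o < κ.ord, ∃ ξ < μ.ord, o < F c ξ)
    (ι : (μ.ord.ToType → κ.ord.ToType) → Set κ.ord.ToType)
    -- (iii)
    (hsame : ∀ c d : μ.ord.ToType → κ.ord.ToType, ∀ ξ < μ.ord,
      (∀ η : μ.ord.ToType, idx μ η < ξ → c η = d η) →
      {b | b ∈ ι c ∧ idx κ b < F c ξ} = {b | b ∈ ι d ∧ idx κ b < F c ξ})
    -- (iv)
    (hsplit : ∀ c d : μ.ord.ToType → κ.ord.ToType, ∀ ξ : μ.ord.ToType,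
      (∀ η : μ.ord.ToType, η < ξ → c η = d η) → c ξ ≠ d ξ →
      {b | b ∈ ι c ∧ idx κ b < min (F c (idx μ ξ + 1)) (F d (idx μ ξ + 1))} ≠
        {b | b ∈ ι d ∧ idx κ b < min (F c (idx μ ξ + 1)) (F d (idx μ ξ + 1))}) :
    Function.Injective ι ∧
      @Continuous _ _ (funTop μ κ) (powTop κ) ι ∧
      ∀ O : Set (μ.ord.ToType → κ.ord.ToType), @IsOpen _ (funTop μ κ) O →
        ∃ V : Set (Set κ.ord.ToType), @IsOpen _ (powTop κ) V ∧
          ι '' O = V ∩ Set.range ι :=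
  statement6_general μ κ hμ F hFlt hFmono hFcof ι hsame hsplit
end

section
/- Let κ be an infinite regular cardinal and let A be an almost disjoint family in 𝒫(κ) of cardinality κ. Then A is not maximal: there exists an unbounded subset x of κ such that x ∩ y is bounded in κ for every y ∈ A. -/
/-!
Enumerate the family as `(B i)` indexed by `κ` itself and diagonalise: choose `x i ∈ B i` with
`i ≤ x i` and above the bounds of `B i ∩ B j` for all `j < i`; there are fewer than `κ = cf κ` of
them, so such an `x i` exists. Then `{x i}` is unbounded, and it meets `B j` only in points
`x i` with `i ≤ j`, a set of size `< κ`, hence bounded.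
-/

universe u

open Cardinal Set

section Diagonal

variable {α : Type u} [LinearOrder α]

theorem bounded_of_mk_lt_cof {s : Set α} (hs : #s < Order.cof α) : Bounded (· < ·) s :=
  not_isCofinal_iff.1 fun h => (Order.cof_le h).not_gt hs

theorem bounded_iUnion_of_mk_lt_cof {ι : Type u} {s : ι → Set α} (hι : #ι < Order.cof α)
    (hs : ∀ i, Bounded (· < ·) (s i)) : Bounded (· < ·) (⋃ i, s i) := by
  refine not_isCofinal_iff.1 fun h => ?_
  obtain ⟨i, hi⟩ := isCofinal_of_isCofinal_iUnion h hι
  exact not_isCofinal_iff.2 (hs i) hi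

variable (hIic : ∀ i : α, #(Iic i) < Order.cof α) {B : α → Set α}
  (hB : ∀ i, Unbounded (· < ·) (B i)) (hdisj : Pairwise fun i j => Bounded (· < ·) (B i ∩ B j))
include hIic hB hdisj

theorem exists_diagonal_mem (i : α) : ∃ x ∈ B i, i ≤ x ∧ ∀ j < i, x ∉ B j := by
  have hsmall : #(Iio i) < Order.cof α :=
    (mk_le_mk_of_subset Iio_subset_Iic_self).trans_lt (hIic i)
  obtain ⟨m, hm⟩ := bounded_iUnion_of_mk_lt_cof (s := fun j : Iio i => B i ∩ B j) hsmall
    fun j => hdisj (ne_of_gt j.2)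
  obtain ⟨x, hx, hle⟩ := unbounded_lt_iff.1 (hB i) (max i m)
  refine ⟨x, hx, le_of_max_le_left hle, fun j hj hxj => ?_⟩
  exact (hm x (mem_iUnion.2 ⟨⟨j, hj⟩, hx, hxj⟩)).not_ge (le_of_max_le_right hle)

theorem exists_unbounded_forall_bounded_inter :
    ∃ x : Set α, Unbounded (· < ·) x ∧ ∀ i, Bounded (· < ·) (x ∩ B i) := by
  choose x hxB hix hxnot using exists_diagonal_mem hIic hB hdisj
  refine ⟨range x, fun a => ⟨x a, mem_range_self a, (hix a).not_gt⟩, fun j => ?_⟩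
  have hsub : range x ∩ B j ⊆ x '' Iic j := by
    rintro _ ⟨⟨i, rfl⟩, hxj⟩
    exact ⟨i, not_lt.1 fun hji => hxnot i j hji hxj, rfl⟩
  exact bounded_of_mk_lt_cof ((mk_le_mk_of_subset hsub).trans_lt (mk_image_le.trans_lt (hIic j)))

end Diagonal

theorem Cardinal.IsRegular.mk_Iic_toType_ord_lt {κ : Cardinal.{u}} (hreg : κ.IsRegular)
    (i : κ.ord.ToType) : #(Iic i) < Order.cof κ.ord.ToType := by
  rw [Ordinal.cof_toType, hreg.cof_ord, ← Iio_insert]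
  exact mk_insert_le.trans_lt <| add_lt_of_lt hreg.aleph0_le (by simpa using mk_Iio_lt i)
    (one_lt_aleph0.trans_le hreg.aleph0_le)

/-- Let `κ` be an infinite regular cardinal (represented by the canonical
type `κ.ord.toType` of order type `κ`) and let `A` be an almost disjoint family in `𝒫(κ)`
of cardinality `κ`: a family of `κ` many unbounded subsets of `κ` whose pairwise
intersections are bounded. Then `A` is not maximal: there exists an unbounded subset `x`
of `κ` such that `x ∩ y` is bounded in `κ` for every `y ∈ A`. -/
theorem statement7 (κ : Cardinal.{u}) (hreg : κ.IsRegular)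
    (A : Set (Set κ.ord.ToType))
    (hunbounded : ∀ x ∈ A, Set.Unbounded (· < ·) x)
    (halmostdisj : ∀ x ∈ A, ∀ y ∈ A, x ≠ y → Set.Bounded (· < ·) (x ∩ y))
    (hcard : Cardinal.mk A = κ) :
    ∃ x : Set κ.ord.ToType, Set.Unbounded (· < ·) x ∧
      ∀ y ∈ A, Set.Bounded (· < ·) (x ∩ y) := by
  obtain ⟨e⟩ : Nonempty (κ.ord.ToType ≃ A) := by
    rw [← Cardinal.eq, mk_toType, card_ord, hcard]
  obtain ⟨x, hx, hxB⟩ := exists_unbounded_forall_bounded_inter hreg.mk_Iic_toType_ord_lt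
    (B := fun i => e i) (fun i => hunbounded _ (e i).2)
    fun i j hij => halmostdisj _ (e i).2 _ (e j).2 fun h => hij (e.injective (Subtype.ext h))
  refine ⟨x, hx, fun y hy => ?_⟩
  simpa using hxB (e.symm ⟨y, hy⟩)
end

section
/- If κ is a strongly inaccessible cardinal (an uncountable regular strong limit cardinal), then there exists an almost disjoint family in 𝒫(κ) of cardinality 2^κ. -/
/-!
For `f : κ → Bool` let `branch f` send `α < κ` to the node `(α, f ↾ α)` of the tree of bounded
Boolean sequences. Distinct `f, f'` share only the nodes below their first disagreement, so the
`2 ^ κ` branches `range (branch f)` pairwise meet in fewer than `κ` nodes. When `κ` is a strong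
limit the tree has only `κ` nodes, so the branches transport to subsets of `κ`; regularity turns
"fewer than `κ` elements" into "bounded".
-/

universe u

open Cardinal Ordinal Set Function

section Branch

variable {T : Type*} [Preorder T] {X : Type*}

def branch (f : T → X) (a : T) : Σ a : T, (Iio a → X) := ⟨a, fun b => f b⟩

theorem branch_injective (f : T → X) : Injective (branch f) :=
  fun _ _ h => congrArg Sigma.fst h

theorem branch_eq_branch_iff {f f' : T → X} {a a' : T} :
    branch f a = branch f' a' ↔ a = a' ∧ ∀ b < a, f b = f' b := by
  constructor
  · intro h
    obtain ⟨rfl, h⟩ := Sigma.mk.inj_iff.1 h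
    exact ⟨rfl, fun b hb => congrFun (eq_of_heq h) ⟨b, hb⟩⟩
  · rintro ⟨rfl, h⟩
    exact Sigma.ext rfl (heq_of_eq (funext fun b => h b b.2))

theorem range_branch_injective [NoMaxOrder T] :
    Injective fun f : T → X => range (branch f) := by
  intro f f' h
  funext b
  obtain ⟨c, hbc⟩ := exists_gt b
  obtain ⟨c', hc'⟩ : branch f c ∈ range (branch f') := h.subset (mem_range_self c)
  obtain ⟨rfl, hagree⟩ := branch_eq_branch_iff.1 hc'
  exact (hagree b hbc).symm

end Branch

theorem range_branch_inter_subset {T X : Type*} [LinearOrder T] {f f' : T → X} {b : T}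
    (hb : f b ≠ f' b) :
    range (branch f) ∩ range (branch f') ⊆ branch f '' Iic b := by
  rintro _ ⟨⟨a, rfl⟩, ⟨a', ha'⟩⟩
  obtain ⟨rfl, hagree⟩ := branch_eq_branch_iff.1 ha'
  exact ⟨_, not_lt.1 fun hba => hb (hagree b hba).symm, rfl⟩

theorem exists_almostDisjoint_family_of_mk_sigma_le {T : Type u} [LinearOrder T] [NoMaxOrder T]
    (htree : #(Σ a : T, (Iio a → Bool)) ≤ #T) (hIio : ∀ b : T, #(Iio b) < #T) :
    ∃ A : Set (Set T), (∀ x ∈ A, #x = #T) ∧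
      (∀ x ∈ A, ∀ y ∈ A, x ≠ y → #(x ∩ y : Set T) < #T) ∧ #A = 2 ^ #T := by
  have hmk : #(Σ a : T, (Iio a → Bool)) = #T :=
    htree.antisymm (mk_le_of_injective (branch_injective fun _ => false))
  obtain ⟨e⟩ := Cardinal.eq.1 hmk
  let x : (T → Bool) → Set T := fun f => e '' range (branch f)
  have hx : Injective x := (image_injective.2 e.injective).comp range_branch_injective
  refine ⟨range x, ?_, ?_, ?_⟩
  · rintro _ ⟨f, rfl⟩
    rw [mk_image_eq e.injective, mk_range_eq _ (branch_injective f)]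
  · rintro _ ⟨f, rfl⟩ _ ⟨f', rfl⟩ hne
    obtain ⟨b, hb⟩ := Function.ne_iff.1 (hx.ne_iff.1 hne)
    obtain ⟨c, hbc⟩ := exists_gt b
    calc #(x f ∩ x f' : Set T) = #(range (branch f) ∩ range (branch f') : Set _) := by
          rw [← image_inter e.injective, mk_image_eq e.injective]
      _ ≤ #(branch f '' Iic b) := mk_le_mk_of_subset (range_branch_inter_subset hb)
      _ ≤ #(Iio c) := mk_image_le.trans (mk_le_mk_of_subset fun _ ha => lt_of_le_of_lt ha hbc)
      _ < #T := hIio c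
  · rw [mk_range_eq _ hx]; simp

section InitialOrdinal

variable {α : Type u} [LinearOrder α] [WellFoundedLT α]

theorem unbounded_of_mk_eq (hα : ord #α = typeLT α) {s : Set α} (hs : #s = #α) :
    Unbounded (· < ·) s := by
  rw [← not_bounded_iff]
  rintro ⟨b, hb⟩
  exact ((mk_le_mk_of_subset (t := Iio b) hb).trans_lt (mk_Iio_lt b hα)).ne hs

theorem bounded_of_mk_lt (hα : ord #α = typeLT α) (hreg : (#α).IsRegular) {s : Set α}
    (hs : #s < #α) : Bounded (· < ·) s := by
  have hcof : Order.cof α = #α := by rw [← cof_type, ← hα, hreg.cof_ord]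
  exact not_isCofinal_iff.1 fun h => not_lt_of_ge (Order.cof_le h) (hcof ▸ hs)

theorem mk_sigma_Iio_fun_bool_le (hα : ord #α = typeLT α) (hs : (#α).IsStrongLimit) :
    #(Σ a : α, (Iio a → Bool)) ≤ #α :=
  calc #(Σ a : α, (Iio a → Bool)) = sum fun a : α => 2 ^ #(Iio a) := by
        rw [mk_sigma]; simp
    _ ≤ sum fun _ : α => #α := sum_le_sum _ _ fun a => (hs.isStrongPrelimit (mk_Iio_lt a hα)).le
    _ = #α * #α := sum_const' _ _
    _ = #α := mul_eq_self hs.aleph0_le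

end InitialOrdinal

/-- If `κ` is a strongly inaccessible cardinal (an uncountable regular
strong limit cardinal), represented by the canonical type `κ.ord.toType` of order type `κ`,
then there exists an almost disjoint family in `𝒫(κ)` of cardinality `2^κ`: a family of
`2^κ` many unbounded subsets of `κ` whose pairwise intersections are bounded. -/
theorem statement9 (κ : Cardinal.{u}) (hinacc : κ.IsInaccessible) :
    ∃ A : Set (Set κ.ord.ToType),
      (∀ x ∈ A, Set.Unbounded (· < ·) x) ∧
      (∀ x ∈ A, ∀ y ∈ A, x ≠ y → Set.Bounded (· < ·) (x ∩ y)) ∧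
      Cardinal.mk A = 2 ^ κ := by
  have hκ : #κ.ord.ToType = κ := mk_ord_toType κ
  have hord : ord #κ.ord.ToType = typeLT κ.ord.ToType := by simp
  have := Cardinal.noMaxOrder hinacc.aleph0_lt.le
  obtain ⟨A, hmk, hinter, hA⟩ := exists_almostDisjoint_family_of_mk_sigma_le
    (mk_sigma_Iio_fun_bool_le hord (by rw [hκ]; exact hinacc.isStrongLimit)) (mk_Iio_lt · hord)
  refine ⟨A, fun x hx => unbounded_of_mk_eq hord (hmk x hx), fun x hx y hy hxy => ?_,
    by rwa [hκ] at hA⟩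
  exact bounded_of_mk_lt hord (by rw [hκ]; exact hinacc.isRegular) (hinter x hx y hy hxy)
end
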